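/- arXiv:2312.09849 — 4 statements merged into one kernel-verified Lean document; each statement's English description precedes it below -/
import Mathlib

section
/- Let p be a prime, G a finite abelian group, c ∈ G an element with c² = 1, and σ ∈ G an element of order n. In the ring R = Z_p[G]/(1+c), the annihilator of the image of 1 − σ^{-1} (equivalently, the kernel of multiplication by 1 − σ^{-1} on R) is the ideal of R generated by the image of the norm element 1 + σ + σ² + ⋯ + σ^{n-1}. -/
open MonoidAlgebra Finsupp

section Helpers

variable {p : ℕ} [Fact p.Prime] {G : Type*} [CommGroup G] [Fintype G]

private lemma exists_pow_lt' {σ h : G} {n : ℕ} (hn : orderOf σ = n)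
    (hh : h ∈ Subgroup.zpowers σ) : ∃ i, i < n ∧ σ ^ i = h := by
  have hfin : IsOfFinOrder σ := isOfFinOrder_of_finite σ
  obtain ⟨i, hi⟩ := hfin.mem_powers_iff_mem_zpowers.mpr hh
  have hnpos : 0 < n := hn ▸ orderOf_pos σ
  refine ⟨i % n, Nat.mod_lt _ hnpos, ?_⟩
  rw [← hn, pow_mod_orderOf]
  simpa using hi

private lemma coeff_mul_of (x : MonoidAlgebra ℤ_[p] G) (g h : G) :
    (x * MonoidAlgebra.of ℤ_[p] G g).coeff h = x.coeff (h * g⁻¹) := by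
  rw [MonoidAlgebra.of_apply, MonoidAlgebra.coeff_mul_single_apply, mul_one]

private lemma coeff_mul_one_sub_of (x : MonoidAlgebra ℤ_[p] G) (g h : G) :
    (x * (1 - MonoidAlgebra.of ℤ_[p] G g)).coeff h = x.coeff h - x.coeff (h * g⁻¹) := by
  rw [mul_sub, mul_one, MonoidAlgebra.coeff_sub, Finsupp.sub_apply, coeff_mul_of]

/-- The workhorse: if `x` is `σ`-invariant mod `d` coefficientwise, then `x` is congruent
mod `d` to a multiple of the norm element. -/
private lemma factA (σ : G) (n : ℕ) (hn : orderOf σ = n) (d : ℤ_[p])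
    (x : MonoidAlgebra ℤ_[p] G) (hx : ∀ g : G, d ∣ (x.coeff (g * σ) - x.coeff g)) :
    ∃ y : MonoidAlgebra ℤ_[p] G,
      ∀ g : G, d ∣ ((x - (∑ i ∈ Finset.range n, MonoidAlgebra.of ℤ_[p] G (σ ^ i)) * y).coeff g) := by
  classical
  set Z := Subgroup.zpowers σ with hZ
  let rep : G → G := fun g => (QuotientGroup.mk (s := Z) g).out
  have hrep_mul : ∀ (g z : G), z ∈ Z → rep (g * z) = rep g := by
    intro g z hz
    show (QuotientGroup.mk (s := Z) (g * z)).out = (QuotientGroup.mk (s := Z) g).out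
    rw [QuotientGroup.mk_mul_of_mem g hz]
  have hrep_rep : ∀ g : G, rep (rep g) = rep g := by
    intro g
    show (QuotientGroup.mk (s := Z) ((QuotientGroup.mk (s := Z) g).out)).out = _
    rw [QuotientGroup.out_eq']
  have hrep_rel : ∀ g : G, ∃ i, i < n ∧ g = rep g * σ ^ i := by
    intro g
    have hmem : (rep g)⁻¹ * g ∈ Z := by
      apply QuotientGroup.eq.mp
      exact QuotientGroup.out_eq' (QuotientGroup.mk (s := Z) g)
    obtain ⟨i, hi, hσ⟩ := exists_pow_lt' hn hmem
    exact ⟨i, hi, by rw [hσ, mul_inv_cancel_left]⟩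
  have hstep : ∀ (g : G) (i : ℕ), d ∣ (x.coeff (g * σ ^ i) - x.coeff g) := by
    intro g i
    induction i with
    | zero => simp
    | succ i ih =>
      have h1 := hx (g * σ ^ i)
      rw [mul_assoc, ← pow_succ] at h1
      have := dvd_add h1 ih
      rwa [sub_add_sub_cancel] at this
  have huniq : ∀ i j : ℕ, i < n → j < n → σ ^ i = σ ^ j → i = j := by
    intro i j hi hj hij
    have := pow_inj_mod.mp hij
    rwa [hn, Nat.mod_eq_of_lt hi, Nat.mod_eq_of_lt hj] at this
  let y : MonoidAlgebra ℤ_[p] G :=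
    MonoidAlgebra.ofCoeff (Finsupp.onFinset x.coeff.support (fun h => if rep h = h then x.coeff h else 0)
      (by
        intro a ha
        rw [Finsupp.mem_support_iff]
        intro h0
        apply ha
        simp [h0]))
  have hyval : ∀ h : G, y.coeff h = if rep h = h then x.coeff h else 0 := fun h => rfl
  refine ⟨y, fun g => ?_⟩
  obtain ⟨i₀, hi₀n, hgi₀⟩ := hrep_rel g
  have h1 : (σ ^ i₀)⁻¹ * g = rep g := by
    rw [inv_mul_eq_iff_eq_mul]
    exact hgi₀.trans (mul_comm _ _)
  have key : ((∑ i ∈ Finset.range n, MonoidAlgebra.of ℤ_[p] G (σ ^ i)) * y).coeff g = x.coeff (rep g) := by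
    rw [Finset.sum_mul, MonoidAlgebra.coeff_sum, Finset.sum_apply']
    rw [Finset.sum_eq_single i₀]
    · rw [MonoidAlgebra.of_apply, MonoidAlgebra.coeff_single_mul_apply, one_mul]
      rw [h1, hyval, if_pos (hrep_rep g)]
    · intro j hj hne
      rw [MonoidAlgebra.of_apply, MonoidAlgebra.coeff_single_mul_apply, one_mul, hyval, if_neg]
      intro habs
      have hrg : rep ((σ ^ j)⁻¹ * g) = rep g := by
        rw [mul_comm]
        exact hrep_mul g _ (by exact Subgroup.inv_mem _ (Subgroup.pow_mem _ (Subgroup.mem_zpowers σ) j))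
      have heq : (σ ^ i₀)⁻¹ * g = (σ ^ j)⁻¹ * g := by
        rw [h1]
        exact hrg.symm.trans habs
      have hσij : σ ^ i₀ = σ ^ j := by
        have := mul_right_cancel (a := (σ ^ i₀)⁻¹) (b := g) (c := (σ ^ j)⁻¹) heq
        exact inv_injective this
      exact hne (huniq j i₀ (Finset.mem_range.mp hj) hi₀n hσij.symm)
    · intro habs
      exact absurd (Finset.mem_range.mpr hi₀n) habs
  rw [MonoidAlgebra.coeff_sub, Finsupp.sub_apply, key]
  have : x.coeff g - x.coeff (rep g) = x.coeff (rep g * σ ^ i₀) - x.coeff (rep g) := by rw [← hgi₀]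
  rw [this]
  exact hstep (rep g) i₀

private lemma padicDivHelper (d : ℤ_[p]) (hd : d ≠ 0) (x : MonoidAlgebra ℤ_[p] G)
    (h : ∀ g, d ∣ x.coeff g) :
    ∃ z : MonoidAlgebra ℤ_[p] G, x = MonoidAlgebra.single 1 d * z := by
  classical
  choose f hf using h
  refine ⟨MonoidAlgebra.ofCoeff (Finsupp.onFinset x.coeff.support (fun g => f g) ?_), ?_⟩
  · intro a ha
    rw [Finsupp.mem_support_iff]
    intro h0
    apply ha
    have := hf a
    rw [h0] at this
    rcases mul_eq_zero.mp this.symm with h | h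
    · exact absurd h hd
    · exact h
  · ext g
    rw [MonoidAlgebra.coeff_single_mul_apply, inv_one, one_mul]
    exact hf g

private lemma norm_mul_of (σ : G) (n : ℕ) (hn : orderOf σ = n) :
    (∑ i ∈ Finset.range n, MonoidAlgebra.of ℤ_[p] G (σ ^ i)) * MonoidAlgebra.of ℤ_[p] G σ
      = ∑ i ∈ Finset.range n, MonoidAlgebra.of ℤ_[p] G (σ ^ i) := by
  rw [Finset.sum_mul]
  have h1 : ∀ i : ℕ, MonoidAlgebra.of ℤ_[p] G (σ ^ i) * MonoidAlgebra.of ℤ_[p] G σ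
      = MonoidAlgebra.of ℤ_[p] G (σ ^ (i + 1)) := by
    intro i
    rw [← map_mul, ← pow_succ]
  simp_rw [h1]
  have h2 := Finset.sum_range_succ (fun i => MonoidAlgebra.of ℤ_[p] G (σ ^ i)) n
  have h3 := Finset.sum_range_succ' (fun i => MonoidAlgebra.of ℤ_[p] G (σ ^ i)) n
  have h4 : σ ^ n = σ ^ 0 := by rw [← hn, pow_orderOf_eq_one, pow_zero]
  rw [h2, h4] at h3
  exact add_right_cancel h3.symm

private lemma norm_mul_one_sub_inv (σ : G) (n : ℕ) (hn : orderOf σ = n) :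
    (∑ i ∈ Finset.range n, MonoidAlgebra.of ℤ_[p] G (σ ^ i))
      * (1 - MonoidAlgebra.of ℤ_[p] G σ⁻¹) = 0 := by
  have h1 : (∑ i ∈ Finset.range n, MonoidAlgebra.of ℤ_[p] G (σ ^ i))
      * MonoidAlgebra.of ℤ_[p] G σ⁻¹ = ∑ i ∈ Finset.range n, MonoidAlgebra.of ℤ_[p] G (σ ^ i) := by
    conv_lhs => rw [← norm_mul_of σ n hn]
    rw [mul_assoc, ← map_mul, mul_inv_cancel, map_one, mul_one]
  rw [mul_sub, mul_one, h1, sub_self]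

end Helpers

/-- Let `p` be a prime, `G` a finite abelian group, `c ∈ G` an element with
`c² = 1`, and `σ ∈ G` an element of order `n`.  In the ring `R = ℤ_[p][G]/(1+c)`, the
annihilator of the image of `1 - σ⁻¹` is the ideal of `R` generated by the image of the norm
element `1 + σ + σ² + ⋯ + σ^(n-1)`. -/
theorem annihilator_one_sub_inv_eq_span_norm
    (p : ℕ) [Fact p.Prime] (G : Type*) [CommGroup G] [Fintype G]
    (c : G) (hc : c ^ 2 = 1) (σ : G) (n : ℕ) (hn : orderOf σ = n)
    (x : MonoidAlgebra ℤ_[p] G ⧸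
      Ideal.span {(1 : MonoidAlgebra ℤ_[p] G) + MonoidAlgebra.of ℤ_[p] G c}) :
    x * (1 - Ideal.Quotient.mk
        (Ideal.span {(1 : MonoidAlgebra ℤ_[p] G) + MonoidAlgebra.of ℤ_[p] G c})
        (MonoidAlgebra.of ℤ_[p] G σ⁻¹)) = 0 ↔
      x ∈ Ideal.span {Ideal.Quotient.mk
        (Ideal.span {(1 : MonoidAlgebra ℤ_[p] G) + MonoidAlgebra.of ℤ_[p] G c})
        (∑ i ∈ Finset.range n, MonoidAlgebra.of ℤ_[p] G (σ ^ i))} := by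
  classical
  obtain ⟨a, rfl⟩ := Ideal.Quotient.mk_surjective x
  set I : Ideal (MonoidAlgebra ℤ_[p] G) :=
    Ideal.span {(1 : MonoidAlgebra ℤ_[p] G) + MonoidAlgebra.of ℤ_[p] G c} with hI
  set N : MonoidAlgebra ℤ_[p] G := ∑ i ∈ Finset.range n, MonoidAlgebra.of ℤ_[p] G (σ ^ i)
    with hNdef
  have lhs_eq : Ideal.Quotient.mk I a * (1 - Ideal.Quotient.mk I (MonoidAlgebra.of ℤ_[p] G σ⁻¹))
      = Ideal.Quotient.mk I (a * (1 - MonoidAlgebra.of ℤ_[p] G σ⁻¹)) := by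
    rw [map_mul, map_sub, map_one]
  rw [lhs_eq, Ideal.Quotient.eq_zero_iff_mem]
  have rhs_eq : Ideal.span {Ideal.Quotient.mk I N}
      = Ideal.map (Ideal.Quotient.mk I) (Ideal.span {N}) := by
    rw [Ideal.map_span, Set.image_singleton]
  rw [rhs_eq, Ideal.mem_quotient_iff_mem_sup]
  have hNτ : N * (1 - MonoidAlgebra.of ℤ_[p] G σ⁻¹) = 0 := norm_mul_one_sub_inv σ n hn
  constructor
  · intro hmem
    rw [hI] at hmem
    by_cases hc1 : c = 1
    · subst hc1
      have hof1 : MonoidAlgebra.of ℤ_[p] G (1 : G) = 1 := map_one _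
      rw [hof1] at hmem
      obtain ⟨b, hb⟩ := Ideal.mem_span_singleton.mp hmem
      have hx : ∀ g : G, (2 : ℤ_[p]) ∣ (a.coeff (g * σ) - a.coeff g) := by
        intro g
        have h2 := DFunLike.congr_fun (congrArg MonoidAlgebra.coeff hb) g
        rw [coeff_mul_one_sub_of, inv_inv] at h2
        have h3 : (((1 : MonoidAlgebra ℤ_[p] G) + 1) * b).coeff g = 2 * b.coeff g := by
          rw [add_mul, one_mul, MonoidAlgebra.coeff_add, Finsupp.add_apply]
          ring
        rw [h3] at h2
        exact ⟨-(b.coeff g), by linear_combination -h2⟩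
      obtain ⟨y, hy⟩ := factA σ n hn 2 a hx
      obtain ⟨z, hz⟩ := padicDivHelper 2 (by norm_num) (a - N * y) hy
      have hsingle : (MonoidAlgebra.single (1 : G) (2 : ℤ_[p]) : MonoidAlgebra ℤ_[p] G)
          = 1 + MonoidAlgebra.of ℤ_[p] G 1 := by
        rw [hof1, MonoidAlgebra.one_def, ← MonoidAlgebra.single_add, one_add_one_eq_two]
      rw [hsingle, hof1] at hz
      refine Submodule.mem_sup.mpr ⟨N * y, Ideal.mem_span_singleton.mpr (dvd_mul_right N y),
        ((1 : MonoidAlgebra ℤ_[p] G) + 1) * z, ?_, by linear_combination -hz⟩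
      rw [hI, hof1]
      exact Ideal.mul_mem_right _ _ (Ideal.subset_span (Set.mem_singleton _))
    · haveI h2prime : Fact (Nat.Prime 2) := ⟨Nat.prime_two⟩
      have hc2 : orderOf c = 2 := orderOf_eq_prime hc hc1
      have hcc : c * c = 1 := by rw [← sq]; exact hc
      have hccinv : c⁻¹ = c := inv_eq_of_mul_eq_one_right hcc
      have hofc : MonoidAlgebra.of ℤ_[p] G c * MonoidAlgebra.of ℤ_[p] G c = 1 := by
        rw [← map_mul, hcc, map_one]
      have hN2 : (∑ i ∈ Finset.range 2, MonoidAlgebra.of ℤ_[p] G (c ^ i))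
          = 1 + MonoidAlgebra.of ℤ_[p] G c := by
        rw [Finset.sum_range_succ, Finset.sum_range_one, pow_zero, pow_one, map_one]
      obtain ⟨t, ht⟩ := Ideal.mem_span_singleton.mp hmem
      set u : MonoidAlgebra ℤ_[p] G := a * (1 - MonoidAlgebra.of ℤ_[p] G c) with hudef
      have hucoeff : ∀ g : G, u.coeff g = a.coeff g - a.coeff (g * c) := by
        intro g
        rw [hudef, coeff_mul_one_sub_of, hccinv]
      have hu0 : u * (1 - MonoidAlgebra.of ℤ_[p] G σ⁻¹) = 0 := by
        have hz0 : ((1 : MonoidAlgebra ℤ_[p] G) + MonoidAlgebra.of ℤ_[p] G c)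
            * (1 - MonoidAlgebra.of ℤ_[p] G c) = 0 := by
          linear_combination -hofc
        calc u * (1 - MonoidAlgebra.of ℤ_[p] G σ⁻¹)
            = (a * (1 - MonoidAlgebra.of ℤ_[p] G σ⁻¹)) * (1 - MonoidAlgebra.of ℤ_[p] G c) := by
              rw [hudef]; ring
          _ = (((1 : MonoidAlgebra ℤ_[p] G) + MonoidAlgebra.of ℤ_[p] G c) * t)
              * (1 - MonoidAlgebra.of ℤ_[p] G c) := by rw [ht]
          _ = t * (((1 : MonoidAlgebra ℤ_[p] G) + MonoidAlgebra.of ℤ_[p] G c)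
              * (1 - MonoidAlgebra.of ℤ_[p] G c)) := by ring
          _ = 0 := by rw [hz0, mul_zero]
      have hP1 : ∀ g : G, u.coeff (g * σ) = u.coeff g := by
        intro g
        have h2 := DFunLike.congr_fun (congrArg MonoidAlgebra.coeff hu0) g
        rw [coeff_mul_one_sub_of, inv_inv, MonoidAlgebra.coeff_zero, Finsupp.coe_zero, Pi.zero_apply, sub_eq_zero] at h2
        exact h2.symm
      have hP2 : ∀ g : G, u.coeff (g * c) = - u.coeff g := by
        intro g
        have hmulc : u * MonoidAlgebra.of ℤ_[p] G c = - u := by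
          rw [hudef]
          linear_combination (-a) * hofc
        have h2 := DFunLike.congr_fun (congrArg MonoidAlgebra.coeff hmulc) g
        rw [coeff_mul_of, hccinv, MonoidAlgebra.coeff_neg, Finsupp.neg_apply] at h2
        exact h2
      by_cases hcZ : c ∈ Subgroup.zpowers σ
      · have hpow : ∀ (i : ℕ) (g : G), u.coeff (g * σ ^ i) = u.coeff g := by
          intro i
          induction i with
          | zero => simp
          | succ i ih => intro g; rw [pow_succ, ← mul_assoc, hP1, ih]
        obtain ⟨i, hin, hσi⟩ := exists_pow_lt' hn hcZ
        have hu00 : u = 0 := by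
          ext g
          have h1 := hP2 g
          rw [← hσi, hpow i g] at h1
          have h2 : (2 : ℤ_[p]) * u.coeff g = 0 := by linear_combination h1
          rcases mul_eq_zero.mp h2 with h | h
          · exact absurd h (by norm_num)
          · simpa using h
        have hsym : ∀ g : G, (0 : ℤ_[p]) ∣ (a.coeff (g * c) - a.coeff g) := by
          intro g
          rw [zero_dvd_iff, sub_eq_zero]
          have h3 := DFunLike.congr_fun (congrArg MonoidAlgebra.coeff hu00) g
          rw [hucoeff, MonoidAlgebra.coeff_zero, Finsupp.coe_zero, Pi.zero_apply, sub_eq_zero] at h3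
          exact h3.symm
        obtain ⟨v', hv'⟩ := factA c 2 hc2 0 a hsym
        have ha : a = ((1 : MonoidAlgebra ℤ_[p] G) + MonoidAlgebra.of ℤ_[p] G c) * v' := by
          ext g
          have h4 := hv' g
          rw [zero_dvd_iff, MonoidAlgebra.coeff_sub, Finsupp.sub_apply, sub_eq_zero] at h4
          rw [← hN2]
          exact h4
        apply Submodule.mem_sup_right
        rw [hI]
        exact Ideal.mem_span_singleton.mpr ⟨v', ha⟩
      · haveI : Fintype (G ⧸ Subgroup.zpowers σ) := Fintype.ofFinite _
        let e := Fintype.equivFin (G ⧸ Subgroup.zpowers σ)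
        let π : G → Fin (Fintype.card (G ⧸ Subgroup.zpowers σ)) :=
          fun g => e (QuotientGroup.mk g)
        have hπσ : ∀ g : G, π (g * σ) = π g := fun g =>
          congrArg e (QuotientGroup.mk_mul_of_mem g (Subgroup.mem_zpowers σ))
        have hπc : ∀ g : G, π (g * c) ≠ π g := by
          intro g h
          have hq : QuotientGroup.mk (s := Subgroup.zpowers σ) (g * c) = QuotientGroup.mk g :=
            e.injective h
          have hmem2 := QuotientGroup.eq.mp hq
          have h3 : (g * c)⁻¹ * g = c := by
            rw [mul_inv_rev, mul_assoc, inv_mul_cancel, mul_one, hccinv]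
          rw [h3] at hmem2
          exact hcZ hmem2
        have hgcc : ∀ g : G, g * c * c = g := by
          intro g
          rw [mul_assoc, hcc, mul_one]
        let w : MonoidAlgebra ℤ_[p] G :=
          MonoidAlgebra.ofCoeff (Finsupp.onFinset u.coeff.support (fun g => if π g < π (g * c) then u.coeff g else 0)
            (by
              intro g hg
              rw [Finsupp.mem_support_iff]
              intro h0
              apply hg
              simp [h0]))
        have hwval : ∀ g : G, w.coeff g = if π g < π (g * c) then u.coeff g else 0 := fun g => rfl
        have hw1 : ∀ g : G, (0 : ℤ_[p]) ∣ (w.coeff (g * σ) - w.coeff g) := by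
          intro g
          rw [zero_dvd_iff, sub_eq_zero, hwval, hwval, mul_right_comm g σ c, hπσ, hπσ, hP1]
        obtain ⟨v, hv⟩ := factA σ n hn 0 w hw1
        have hwN : w = N * v := by
          ext g
          have h4 := hv g
          rw [zero_dvd_iff, MonoidAlgebra.coeff_sub, Finsupp.sub_apply, sub_eq_zero] at h4
          exact h4
        have hkey : ∀ g : G, w.coeff g - w.coeff (g * c) = u.coeff g := by
          intro g
          rcases lt_trichotomy (π g) (π (g * c)) with h | h | h
          · rw [hwval, hwval, if_pos h, if_neg (by rw [hgcc]; exact not_lt.mpr h.le), sub_zero]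
          · exact absurd h.symm (hπc g)
          · rw [hwval, hwval, if_neg (not_lt.mpr h.le), if_pos (by rw [hgcc]; exact h),
              zero_sub, hP2, neg_neg]
        have huw : u = w * (1 - MonoidAlgebra.of ℤ_[p] G c) := by
          ext g
          rw [coeff_mul_one_sub_of w c g, hccinv]
          exact (hkey g).symm
        have hav : (a - N * v) * (1 - MonoidAlgebra.of ℤ_[p] G c) = 0 := by
          rw [sub_mul, ← hudef, ← hwN, ← huw, sub_self]
        have hsym2 : ∀ g : G, (0 : ℤ_[p]) ∣ ((a - N * v).coeff (g * c) - (a - N * v).coeff g) := by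
          intro g
          rw [zero_dvd_iff, sub_eq_zero]
          have h2 := DFunLike.congr_fun (congrArg MonoidAlgebra.coeff hav) g
          rw [coeff_mul_one_sub_of, hccinv, MonoidAlgebra.coeff_zero, Finsupp.coe_zero, Pi.zero_apply, sub_eq_zero] at h2
          exact h2.symm
        obtain ⟨v', hv'⟩ := factA c 2 hc2 0 (a - N * v) hsym2
        have ha : a - N * v = ((1 : MonoidAlgebra ℤ_[p] G) + MonoidAlgebra.of ℤ_[p] G c) * v' := by
          ext g
          have h4 := hv' g
          rw [zero_dvd_iff, MonoidAlgebra.coeff_sub, Finsupp.sub_apply, sub_eq_zero] at h4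
          rw [← hN2]
          exact h4
        refine Submodule.mem_sup.mpr ⟨N * v, Ideal.mem_span_singleton.mpr (dvd_mul_right N v),
          ((1 : MonoidAlgebra ℤ_[p] G) + MonoidAlgebra.of ℤ_[p] G c) * v', ?_,
          by linear_combination -ha⟩
        rw [hI]
        exact Ideal.mul_mem_right _ _ (Ideal.subset_span (Set.mem_singleton _))
  · intro hmem
    obtain ⟨y, hy, z, hz, rfl⟩ := Submodule.mem_sup.mp hmem
    obtain ⟨t, rfl⟩ := Ideal.mem_span_singleton.mp hy
    have hexp : (N * t + z) * (1 - MonoidAlgebra.of ℤ_[p] G σ⁻¹)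
        = (N * (1 - MonoidAlgebra.of ℤ_[p] G σ⁻¹)) * t
          + z * (1 - MonoidAlgebra.of ℤ_[p] G σ⁻¹) := by ring
    rw [hexp, hNτ, zero_mul, zero_add]
    exact Ideal.mul_mem_right _ _ hz
end

section
/- Let p be a prime, A a finitely generated Z_p-module, and f_1, …, f_m : A → N_1, …, N_m finitely many Z_p-linear maps, where each N_i is a finitely generated torsion-free Z_p-module. Set J = ⋂_{i=1}^m ker(f_i) and, for each positive integer k, J_k = ⋂_{i=1}^m f_i^{-1}(p^k N_i). Then ⋂_{k≥1} J_k = J, and the natural map A/J → lim_k A/J_k (the inverse limit taken over the projections A/J_{k+1} → A/J_k) is an isomorphism; equivalently, every compatible system of elements z_k ∈ A/J_k arises from a single element of A. -/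
open Pointwise

section Helpers

variable {R : Type*} [CommRing R] {M : Type*} [AddCommGroup M] [Module R M]

lemma mem_span_singleton_smul_top (t : R) (x : M) :
    x ∈ (Ideal.span {t} • (⊤ : Submodule R M)) ↔ ∃ y : M, t • y = x := by
  rw [Submodule.ideal_span_singleton_smul]
  constructor
  · intro h
    rw [← SetLike.mem_coe, Submodule.coe_pointwise_smul] at h
    obtain ⟨y, -, hy⟩ := Set.mem_smul_set.mp h
    exact ⟨y, hy⟩
  · rintro ⟨y, rfl⟩
    exact Submodule.smul_mem_pointwise_smul y _ ⊤ trivial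

lemma mem_span_singleton_pow_smul_top (t : R) (k : ℕ) (x : M) :
    x ∈ (Ideal.span {t} ^ k • (⊤ : Submodule R M)) ↔ ∃ y : M, t ^ k • y = x := by
  rw [Ideal.span_singleton_pow, mem_span_singleton_smul_top]

lemma chain_sub_mem (S : ℕ → Submodule R M) (hS : ∀ ⦃k l : ℕ⦄, k ≤ l → S l ≤ S k)
    (g : ℕ → M) (h : ∀ l, g (l + 1) - g l ∈ S l) :
    ∀ m n, m ≤ n → g n - g m ∈ S m := by
  intro m n hmn
  induction n, hmn using Nat.le_induction with
  | base => simpa using (S m).zero_mem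
  | succ n hmn ih =>
      have e : g (n + 1) - g m = (g (n + 1) - g n) + (g n - g m) := by abel
      rw [e]
      exact (S m).add_mem (hS hmn (h n)) ih

lemma isPrecomplete_pi {ι : Type*} (t : R) (h : IsPrecomplete (Ideal.span {t}) R) :
    IsPrecomplete (Ideal.span {t}) (ι → R) := by
  constructor
  intro f hf
  have hcomp : ∀ i : ι, ∃ L : R, ∀ n, f n i ≡ L
      [SMOD (Ideal.span {t} ^ n • ⊤ : Submodule R R)] := by
    intro i
    apply h.prec
    intro m n hmn
    have h1 := hf hmn
    rw [SModEq.sub_mem, mem_span_singleton_pow_smul_top] at h1 ⊢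
    obtain ⟨y, hy⟩ := h1
    refine ⟨y i, ?_⟩
    have := congrFun hy i
    simpa using this
  choose L hL using hcomp
  refine ⟨L, fun n => ?_⟩
  rw [SModEq.sub_mem, mem_span_singleton_pow_smul_top]
  have hy : ∀ i, ∃ y : R, t ^ n • y = f n i - L i := by
    intro i
    have := hL i n
    rwa [SModEq.sub_mem, mem_span_singleton_pow_smul_top] at this
  choose y hy using hy
  exact ⟨y, funext fun i => hy i⟩

lemma isPrecomplete_of_surjective {M N : Type*} [AddCommGroup M] [Module R M]
    [AddCommGroup N] [Module R N] (t : R) (π : M →ₗ[R] N) (hπ : Function.Surjective π)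
    (h : IsPrecomplete (Ideal.span {t}) M) : IsPrecomplete (Ideal.span {t}) N := by
  constructor
  intro f hf
  have step : ∀ (n : ℕ) (x : M), π x = f n →
      ∃ y : M, π y = f (n + 1) ∧ ∃ u : M, t ^ n • u = y - x := by
    intro n x hx
    have h1 : f (n + 1) - f n ∈ (Ideal.span {t} ^ n • ⊤ : Submodule R N) := by
      have h2 := hf (Nat.le_succ n)
      rw [SModEq.sub_mem] at h2
      simpa using neg_mem h2
    rw [mem_span_singleton_pow_smul_top] at h1
    obtain ⟨v, hv⟩ := h1
    obtain ⟨w, hw⟩ := hπ v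
    refine ⟨x + t ^ n • w, ?_, ⟨w, by abel⟩⟩
    rw [map_add, map_smul, hw, hx, hv]
    abel
  obtain ⟨x0, hx0⟩ := hπ (f 0)
  let G : ∀ n : ℕ, {x : M // π x = f n} := fun n =>
    Nat.rec ⟨x0, hx0⟩
      (fun n p => ⟨(step n p.1 p.2).choose, (step n p.1 p.2).choose_spec.1⟩) n
  have hGstep : ∀ n : ℕ, ∃ u : M, t ^ n • u = (G (n + 1)).1 - (G n).1 := fun n =>
    (step n (G n).1 (G n).2).choose_spec.2
  have hmono : ∀ ⦃k l : ℕ⦄, k ≤ l →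
      (Ideal.span {t} ^ l • ⊤ : Submodule R M) ≤ Ideal.span {t} ^ k • ⊤ :=
    fun k l hkl => Submodule.smul_mono_left (Ideal.pow_le_pow_right hkl)
  have hcauchy : ∀ {m n : ℕ}, m ≤ n → (G m).1 ≡ (G n).1
      [SMOD (Ideal.span {t} ^ m • ⊤ : Submodule R M)] := by
    intro m n hmn
    rw [SModEq.sub_mem]
    have := chain_sub_mem (fun k => (Ideal.span {t} ^ k • ⊤ : Submodule R M)) hmono
      (fun n => (G n).1) (fun l => by
        obtain ⟨u, hu⟩ := hGstep l
        rw [mem_span_singleton_pow_smul_top]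
        exact ⟨u, hu⟩) m n hmn
    simpa using neg_mem this
  obtain ⟨L, hL⟩ := h.prec @hcauchy
  refine ⟨π L, fun n => ?_⟩
  have := hL n
  rw [SModEq.sub_mem, mem_span_singleton_pow_smul_top] at this ⊢
  obtain ⟨u, hu⟩ := this
  refine ⟨π u, ?_⟩
  rw [← map_smul, hu, map_sub, (G n).2]

lemma isPrecomplete_fg (t : R) (hR : IsPrecomplete (Ideal.span {t}) R)
    (M : Type*) [AddCommGroup M] [Module R M] [Module.Finite R M] :
    IsPrecomplete (Ideal.span {t}) M := by
  obtain ⟨n, π, hπ⟩ := Module.Finite.exists_fin' R M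
  exact isPrecomplete_of_surjective t π hπ (isPrecomplete_pi t hR)


lemma mem_smul_top_equiv {R M₀ M : Type*} [CommRing R] [AddCommGroup M₀] [Module R M₀]
    [AddCommGroup M] [Module R M] (e : M₀ ≃ₗ[R] M) (I : Ideal R) (x : M) :
    x ∈ (I • ⊤ : Submodule R M) ↔ e.symm x ∈ (I • ⊤ : Submodule R M₀) := by
  have h : Submodule.map (e : M₀ →ₗ[R] M) (I • (⊤ : Submodule R M₀)) = I • ⊤ := by
    rw [Submodule.map_smul'', Submodule.map_top, LinearEquiv.range]
  rw [← h, Submodule.mem_map_equiv]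

/-- Krull intersection theorem, universe-polymorphic version. -/
lemma krull_inter {R : Type*} [CommRing R] [IsNoetherianRing R] [IsLocalRing R]
    {M : Type*} [AddCommGroup M] [Module R M] [Module.Finite R M]
    (I : Ideal R) (h : I ≠ ⊤) : (⨅ k : ℕ, I ^ k • ⊤ : Submodule R M) = ⊥ := by
  obtain ⟨n, π, hπ⟩ := Module.Finite.exists_fin' R M
  let e := LinearMap.quotKerEquivOfSurjective π hπ
  rw [eq_bot_iff]
  intro x hx
  rw [Submodule.mem_iInf] at hx
  have h0 : e.symm x ∈ (⨅ k : ℕ, I ^ k • ⊤ :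
      Submodule R ((Fin n → R) ⧸ LinearMap.ker π)) := by
    rw [Submodule.mem_iInf]
    intro k
    exact (mem_smul_top_equiv e (I ^ k) x).mp (hx k)
  rw [Ideal.iInf_pow_smul_eq_bot_of_isLocalRing I h] at h0
  rw [Submodule.mem_bot] at h0 ⊢
  have h1 := congrArg e h0
  simpa using h1

/-- Artin-Rees, weak consequence, universe-polymorphic version. -/
lemma artin_rees_le {R : Type*} [CommRing R] [IsNoetherianRing R]
    {M : Type*} [AddCommGroup M] [Module R M] [Module.Finite R M]
    (I : Ideal R) (S : Submodule R M) :
    ∃ c : ℕ, ∀ n : ℕ, ∀ x : M,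
      x ∈ (I ^ (n + c) • ⊤ ⊓ S : Submodule R M) → x ∈ I ^ n • S := by
  obtain ⟨nn, π, hπ⟩ := Module.Finite.exists_fin' R M
  let e := LinearMap.quotKerEquivOfSurjective π hπ
  set S₀ : Submodule R ((Fin nn → R) ⧸ LinearMap.ker π) :=
    Submodule.comap (e : ((Fin nn → R) ⧸ LinearMap.ker π) →ₗ[R] M) S with hS₀
  obtain ⟨c, hc⟩ := Ideal.exists_pow_inf_eq_pow_smul I S₀
  refine ⟨c, fun n x hx => ?_⟩
  obtain ⟨hx1, hx2⟩ := Submodule.mem_inf.mp hx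
  have h1 : e.symm x ∈ (I ^ (n + c) • ⊤ :
      Submodule R ((Fin nn → R) ⧸ LinearMap.ker π)) :=
    (mem_smul_top_equiv e _ x).mp hx1
  have h2 : e.symm x ∈ S₀ := by
    rw [hS₀, Submodule.mem_comap]
    simpa using hx2
  have h3 : e.symm x ∈ I ^ n • S₀ := by
    have h5 := Submodule.mem_inf.mpr ⟨h1, h2⟩
    rw [hc (n + c) (by omega), Nat.add_sub_cancel] at h5
    exact Submodule.smul_mono le_rfl inf_le_right h5
  have h6 : x ∈ Submodule.map (e : ((Fin nn → R) ⧸ LinearMap.ker π) →ₗ[R] M)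
      (I ^ n • S₀) := by
    rw [Submodule.mem_map_equiv]
    exact h3
  rw [Submodule.map_smul''] at h6
  have h7 : Submodule.map (e : ((Fin nn → R) ⧸ LinearMap.ker π) →ₗ[R] M) S₀ = S := by
    rw [hS₀]
    exact Submodule.map_comap_eq_of_surjective e.surjective S
  rwa [h7] at h6

end Helpers

/-- Let `p` be a prime, `A` a finitely generated `ℤ_[p]`-module and
`f i : A → N i` finitely many `ℤ_[p]`-linear maps into finitely generated torsion-free
`ℤ_[p]`-modules.  Set `J = ⋂ᵢ ker fᵢ` and `J_k = ⋂ᵢ fᵢ⁻¹(p^k Nᵢ)`.  Then `⋂_k J_k = J` and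
every compatible system of elements `z_k ∈ A/J_k` arises from a single element of `A`. -/
theorem iInf_eq_and_surjective_onto_inverse_limit
    (p : ℕ) [Fact p.Prime] (A : Type*) [AddCommGroup A] [Module ℤ_[p] A]
    [Module.Finite ℤ_[p] A]
    (m : ℕ) (N : Fin m → Type*) [∀ i, AddCommGroup (N i)] [∀ i, Module ℤ_[p] (N i)]
    [∀ i, Module.Finite ℤ_[p] (N i)] [∀ i, NoZeroSMulDivisors ℤ_[p] (N i)]
    (f : ∀ i, A →ₗ[ℤ_[p]] N i) :
    (⨅ k : ℕ, ⨅ i, Submodule.comap (f i)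
        (Ideal.span {(p : ℤ_[p]) ^ k} • (⊤ : Submodule ℤ_[p] (N i)))) =
      (⨅ i, LinearMap.ker (f i)) ∧
    ∀ z : ∀ k : ℕ, A ⧸ (⨅ i, Submodule.comap (f i)
        (Ideal.span {(p : ℤ_[p]) ^ k} • (⊤ : Submodule ℤ_[p] (N i)))),
      (∀ k : ℕ, Submodule.mapQ _ _ LinearMap.id
          (by
            refine le_iInf fun i => ?_
            refine le_trans (iInf_le _ i) (Submodule.comap_mono ?_)
            exact Submodule.smul_mono_left (Ideal.span_singleton_le_span_singleton.mpr
              (pow_dvd_pow _ (Nat.le_succ k))))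
          (z (k + 1)) = z k) →
      ∃ a : A, ∀ k : ℕ, Submodule.Quotient.mk a = z k := by
  -- Notation
  set Jk : ℕ → Submodule ℤ_[p] A := fun k => ⨅ i, Submodule.comap (f i)
      (Ideal.span {(p : ℤ_[p]) ^ k} • (⊤ : Submodule ℤ_[p] (N i))) with hJk
  have memJk : ∀ (k : ℕ) (x : A),
      x ∈ Jk k ↔ ∀ i, ∃ y : N i, (p : ℤ_[p]) ^ k • y = f i x := by
    intro k x
    rw [hJk]
    simp only [Submodule.mem_iInf, Submodule.mem_comap, mem_span_singleton_smul_top]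
  set J : Submodule ℤ_[p] A := ⨅ i, LinearMap.ker (f i) with hJ
  have memJ : ∀ x : A, x ∈ J ↔ ∀ i, f i x = 0 := by
    intro x; rw [hJ]; simp [Submodule.mem_iInf]
  have hJle : ∀ k, J ≤ Jk k := by
    intro k x hx
    rw [memJk]
    intro i
    exact ⟨0, by rw [(memJ x).mp hx i, smul_zero]⟩
  have hpA : ∀ (k : ℕ) (x b : A), x - (p : ℤ_[p]) ^ k • b ∈ J → x ∈ Jk k := by
    intro k x b hb
    rw [memJk]
    intro i
    refine ⟨f i b, ?_⟩
    have := (memJ _).mp hb i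
    rw [map_sub, map_smul, sub_eq_zero] at this
    rw [← this]
  have hmono : ∀ ⦃k l : ℕ⦄, k ≤ l → Jk l ≤ Jk k := by
    intro k l hkl x hx
    rw [memJk] at hx ⊢
    intro i
    obtain ⟨y, hy⟩ := hx i
    refine ⟨(p : ℤ_[p]) ^ (l - k) • y, ?_⟩
    rw [smul_smul, ← pow_add, Nat.add_sub_cancel' hkl, hy]
  have hspan_ne : (Ideal.span {(p : ℤ_[p])}) ≠ ⊤ := by
    rw [← PadicInt.maximalIdeal_eq_span_p]
    exact Ideal.IsMaximal.ne_top inferInstance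
  constructor
  · -- First part
    apply le_antisymm
    · intro a ha
      rw [Submodule.mem_iInf] at ha
      rw [memJ]
      intro i
      have hbot : (⨅ k : ℕ, (Ideal.span {(p : ℤ_[p])} ^ k • ⊤ : Submodule ℤ_[p] (N i))) = ⊥ :=
        krull_inter _ hspan_ne
      have hmem : f i a ∈ (⨅ k : ℕ, (Ideal.span {(p : ℤ_[p])} ^ k • ⊤ :
          Submodule ℤ_[p] (N i))) := by
        rw [Submodule.mem_iInf]
        intro k
        have := (memJk k a).mp (ha k)
        rw [mem_span_singleton_pow_smul_top]
        exact this i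
      rw [hbot] at hmem
      simpa using hmem
    · exact le_iInf fun k => hJle k
  · -- Second part
    intro z hz
    have exrep : ∀ k, ∃ x : A, Submodule.Quotient.mk x = z k :=
      fun k => Submodule.Quotient.mk_surjective _ (z k)
    choose a ha using exrep
    have hstep : ∀ k : ℕ, a (k + 1) - a k ∈ Jk k := by
      intro k
      have h1 := hz k
      rw [← ha (k + 1), Submodule.mapQ_apply, LinearMap.id_apply, ← ha k] at h1
      exact (Submodule.Quotient.eq (Jk k)).mp h1
    have htele : ∀ m n : ℕ, m ≤ n → a n - a m ∈ Jk m :=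
      chain_sub_mem Jk hmono a hstep
    -- Artin-Rees
    set F : A →ₗ[ℤ_[p]] (∀ i, N i) := LinearMap.pi f with hF
    obtain ⟨c, hAR⟩ := artin_rees_le (Ideal.span {(p : ℤ_[p])}) (LinearMap.range F)
    have key : ∀ (n : ℕ) (x : A), x ∈ Jk (n + c) →
        ∃ b : A, x - (p : ℤ_[p]) ^ n • b ∈ J := by
      intro n x hx
      have hFx : F x ∈ (Ideal.span {(p : ℤ_[p])} ^ (n + c) • ⊤ ⊓ LinearMap.range F :
          Submodule ℤ_[p] (∀ i, N i)) := by
        refine Submodule.mem_inf.mpr ⟨?_, ⟨x, rfl⟩⟩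
        rw [mem_span_singleton_pow_smul_top]
        rw [memJk] at hx
        choose y hy using hx
        refine ⟨y, funext fun i => ?_⟩
        simpa [hF] using hy i
      have h3 := hAR n _ hFx
      rw [Ideal.span_singleton_pow, Submodule.ideal_span_singleton_smul,
        ← SetLike.mem_coe, Submodule.coe_pointwise_smul] at h3
      obtain ⟨v, hv, hveq⟩ := Set.mem_smul_set.mp h3
      rw [SetLike.mem_coe] at hv
      obtain ⟨b, rfl⟩ := hv
      refine ⟨b, (memJ _).mpr fun i => ?_⟩
      have h0 : F (x - (p : ℤ_[p]) ^ n • b) = 0 := by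
        rw [map_sub, map_smul, hveq, sub_self]
      have h4 := congrFun h0 i
      simpa [hF] using h4
    -- Precompleteness of A ⧸ J
    have hZp : IsPrecomplete (Ideal.span {(p : ℤ_[p])}) ℤ_[p] := by
      have h1 : IsPrecomplete (IsLocalRing.maximalIdeal ℤ_[p]) ℤ_[p] :=
        (inferInstance : IsAdicComplete (IsLocalRing.maximalIdeal ℤ_[p]) ℤ_[p]).toIsPrecomplete
      rwa [PadicInt.maximalIdeal_eq_span_p] at h1
    have hQ : IsPrecomplete (Ideal.span {(p : ℤ_[p])}) (A ⧸ J) :=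
      isPrecomplete_fg _ hZp _
    -- Cauchy sequence in A ⧸ J
    have hcauchy : ∀ {m' n' : ℕ}, m' ≤ n' →
        (Submodule.Quotient.mk (a (m' + c)) : A ⧸ J) ≡ Submodule.Quotient.mk (a (n' + c))
        [SMOD (Ideal.span {(p : ℤ_[p])} ^ m' • ⊤ : Submodule ℤ_[p] (A ⧸ J))] := by
      intro m' n' hmn
      rw [SModEq.sub_mem, mem_span_singleton_pow_smul_top]
      have h1 : a (n' + c) - a (m' + c) ∈ Jk (m' + c) :=
        htele (m' + c) (n' + c) (by omega)
      obtain ⟨b, hb⟩ := key m' _ h1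
      refine ⟨-(Submodule.Quotient.mk b), ?_⟩
      have h2 : (Submodule.Quotient.mk (a (n' + c) - a (m' + c) - (p : ℤ_[p]) ^ m' • b) :
          A ⧸ J) = 0 := by
        rw [Submodule.Quotient.mk_eq_zero]
        exact hb
      simp only [Submodule.Quotient.mk_sub, Submodule.Quotient.mk_smul, sub_eq_zero] at h2
      rw [smul_neg, ← h2]
      abel
    obtain ⟨L, hL⟩ := hQ.prec
      (f := fun n => (Submodule.Quotient.mk (a (n + c)) : A ⧸ J)) @hcauchy
    obtain ⟨aL, haL⟩ := Submodule.Quotient.mk_surjective J L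
    refine ⟨aL, fun k => ?_⟩
    rw [← ha k]
    refine (Submodule.Quotient.eq (Jk k)).mpr ?_
    have h1 : a (k + c) - a k ∈ Jk k := htele k (k + c) (by omega)
    have h2 : aL - a (k + c) ∈ Jk k := by
      have h3 := hL k
      rw [SModEq.sub_mem, mem_span_singleton_pow_smul_top] at h3
      obtain ⟨u, hu⟩ := h3
      obtain ⟨uA, huA⟩ := Submodule.Quotient.mk_surjective J u
      apply hpA k _ (-uA)
      have h4 : (Submodule.Quotient.mk (aL - a (k + c) - (p : ℤ_[p]) ^ k • (-uA)) :
          A ⧸ J) = 0 := by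
        simp only [Submodule.Quotient.mk_sub, Submodule.Quotient.mk_smul,
          Submodule.Quotient.mk_neg, haL, huA, smul_neg, hu]
        abel
      rwa [Submodule.Quotient.mk_eq_zero] at h4
    have e : aL - a k = (aL - a (k + c)) + (a (k + c) - a k) := by abel
    rw [e]
    exact (Jk k).add_mem h2 h1
end

section
/- Let G be a finite abelian group generated by two elements τ and σ̃, where τ has order e. Let I = ⟨τ⟩, let π : Z[G] → Z[G/I] be the natural projection, let σ ∈ G/I be the image of σ̃, and let ΔG ⊂ Z[G] be the augmentation ideal. Define the Z[G]-module W = {(r, s) ∈ ΔG × Z[G/I] : π(r) = (1 − σ^{-1})·s}. Then the elements g_σ = (1 − σ̃^{-1}, 1) and g_τ = (τ − 1, 0) lie in W and generate W as a Z[G]-module, and the kernel of the surjection Z[G]² → W, (a, b) ↦ a·g_σ + b·g_τ, is generated as a Z[G]-module by the two elements (τ − 1, −(1 − σ̃^{-1})) and (0, N_I), where N_I = 1 + τ + τ² + ⋯ + τ^{e-1}. -/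
set_option synthInstance.maxHeartbeats 1000000
set_option maxHeartbeats 1000000

open MonoidAlgebra in
private lemma RW_ker_pi_le {G : Type*} [CommGroup G] (τ : G) (x : MonoidAlgebra ℤ G)
    (hx : MonoidAlgebra.mapDomainRingHom ℤ (QuotientGroup.mk' (Subgroup.zpowers τ)) x = 0) :
    x ∈ Ideal.span {MonoidAlgebra.of ℤ G τ - 1} := by
  classical
  set J := Ideal.span {MonoidAlgebra.of ℤ G τ - (1 : MonoidAlgebra ℤ G)} with hJ
  set q := Ideal.Quotient.mk J with hq
  have hmul : ∀ g h : G, q (of ℤ G g) * q (of ℤ G h) = q (of ℤ G (g * h)) := by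
    intro g h; rw [← map_mul, ← map_mul]
  let u : G →* (MonoidAlgebra ℤ G ⧸ J)ˣ :=
  { toFun := fun g =>
      { val := q (of ℤ G g)
        inv := q (of ℤ G g⁻¹)
        val_inv := by rw [hmul, mul_inv_cancel, map_one, map_one]
        inv_val := by rw [hmul, inv_mul_cancel, map_one, map_one] }
    map_one' := by ext; exact map_one q
    map_mul' := fun g h => by ext; exact (hmul g h).symm }
  have huτ : Subgroup.zpowers τ ≤ u.ker := by
    rw [Subgroup.zpowers_le, MonoidHom.mem_ker]
    ext
    show q (of ℤ G τ) = 1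
    have h1 : of ℤ G τ - 1 ∈ J := Ideal.subset_span (Set.mem_singleton _)
    have := (Ideal.Quotient.eq_zero_iff_mem).mpr h1
    rw [map_sub, map_one, sub_eq_zero] at this
    exact this
  let ub : G ⧸ Subgroup.zpowers τ →* (MonoidAlgebra ℤ G ⧸ J)ˣ :=
    QuotientGroup.lift _ u huτ
  let ρ := (MonoidAlgebra.lift ℤ (MonoidAlgebra ℤ G ⧸ J) (G ⧸ Subgroup.zpowers τ))
    ((Units.coeHom _).comp ub)
  have key : ρ.toRingHom.comp
      (MonoidAlgebra.mapDomainRingHom ℤ (QuotientGroup.mk' (Subgroup.zpowers τ))) = q := by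
    apply MonoidAlgebra.ringHom_ext
    · intro b
      have hb : (MonoidAlgebra.single (1 : G) b : MonoidAlgebra ℤ G)
          = b • (1 : MonoidAlgebra ℤ G) := by
        rw [MonoidAlgebra.one_def, MonoidAlgebra.smul_single, smul_eq_mul, mul_one]
      rw [hb, map_zsmul, map_zsmul, map_one, map_one]
    · intro a
      show ρ (MonoidAlgebra.mapDomainRingHom ℤ (QuotientGroup.mk' (Subgroup.zpowers τ))
        (MonoidAlgebra.single a 1)) = q (MonoidAlgebra.single a 1)
      have h1 : (MonoidAlgebra.mapDomainRingHom ℤ (QuotientGroup.mk' (Subgroup.zpowers τ)))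
          (MonoidAlgebra.single a (1 : ℤ))
          = MonoidAlgebra.single ((QuotientGroup.mk' (Subgroup.zpowers τ)) a) (1 : ℤ) :=
        MonoidAlgebra.mapDomain_single
      rw [h1, MonoidAlgebra.lift_single, one_smul]
      rfl
  have hqx : q x = 0 := by
    have := RingHom.congr_fun key x
    rw [RingHom.comp_apply, hx, map_zero] at this
    exact this.symm
  exact (Ideal.Quotient.eq_zero_iff_mem).mp hqx
private lemma RW_pi_surj {G : Type*} [CommGroup G] (I : Subgroup G) :
    Function.Surjective (MonoidAlgebra.mapDomainRingHom ℤ (QuotientGroup.mk' I)) := by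
  intro s
  refine ⟨MonoidAlgebra.mapDomain Quotient.out s, ?_⟩
  apply MonoidAlgebra.coeff_injective
  show Finsupp.mapDomain (QuotientGroup.mk' I) (Finsupp.mapDomain Quotient.out s.coeff) = s.coeff
  rw [← Finsupp.mapDomain_comp]
  have h : (⇑(QuotientGroup.mk' I) ∘ Quotient.out : (G ⧸ I) → G ⧸ I) = id :=
    funext fun q => QuotientGroup.out_eq' q
  rw [h, Finsupp.mapDomain_id]

private lemma RW_ann {G : Type*} [CommGroup G] [Fintype G] (τ : G) (e : ℕ)
    (he : orderOf τ = e) (b : MonoidAlgebra ℤ G)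
    (hb : b * (MonoidAlgebra.of ℤ G τ - 1) = 0) :
    ∃ c : MonoidAlgebra ℤ G,
      b = c * ∑ i ∈ Finset.range e, MonoidAlgebra.of ℤ G (τ ^ i) := by
  classical
  have h1 : b * MonoidAlgebra.of ℤ G τ = b := by
    have := hb; rwa [mul_sub, mul_one, sub_eq_zero] at this
  have hbτ : ∀ g : G, b.coeff (g * τ⁻¹) = b.coeff g := by
    intro g
    have h2 := MonoidAlgebra.coeff_mul_single_apply b (1 : ℤ) τ g
    rw [show (MonoidAlgebra.single τ (1:ℤ) : MonoidAlgebra ℤ G)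
        = MonoidAlgebra.of ℤ G τ from rfl, h1, mul_one] at h2
    exact h2.symm
  let S : Subgroup G :=
  { carrier := {h | ∀ g, b.coeff (g * h) = b.coeff g}
    one_mem' := fun g => by rw [mul_one]
    mul_mem' := fun {h h'} hh hh' g => by rw [← mul_assoc, hh' (g * h), hh g]
    inv_mem' := fun {h} hh g => by
      have := hh (g * h⁻¹); rw [inv_mul_cancel_right] at this; exact this.symm }
  have hτS : τ ∈ S := by
    intro g; have := hbτ (g * τ); rw [mul_inv_cancel_right] at this; exact this.symm
  have hinv : ∀ (g : G) (n : ℕ), b.coeff (g * τ ^ n) = b.coeff g := by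
    intro g n
    have : τ ^ n ∈ S := pow_mem hτS n
    exact this g
  letI : Fintype (G ⧸ Subgroup.zpowers τ) := Fintype.ofFinite _
  -- the bijection (Fin e) × (G ⧸ ⟨τ⟩) ≃ G
  have key : ∀ (q : G ⧸ Subgroup.zpowers τ) (i : ℕ),
      (QuotientGroup.mk' (Subgroup.zpowers τ)) (τ ^ i * Quotient.out q) = q := by
    intro q i
    rw [map_mul, map_pow,
      show (QuotientGroup.mk' (Subgroup.zpowers τ)) τ = 1 from
        (QuotientGroup.eq_one_iff τ).mpr (Subgroup.mem_zpowers τ),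
      one_pow, one_mul]
    exact QuotientGroup.out_eq' q
  have hepos : 0 < e := he ▸ orderOf_pos τ
  let f : Fin e × (G ⧸ Subgroup.zpowers τ) → G :=
    fun x => τ ^ (x.1 : ℕ) * Quotient.out x.2
  have hinjf : Function.Injective f := by
    rintro ⟨i, q⟩ ⟨j, q'⟩ h
    simp only [f] at h
    have hq : q = q' := by
      rw [← key q (i : ℕ), ← key q' (j : ℕ), h]
    subst hq
    have hpow : τ ^ (i : ℕ) = τ ^ (j : ℕ) := mul_right_cancel h
    have hij : (i : ℕ) = (j : ℕ) := by
      have hm := pow_eq_pow_iff_modEq.mp hpow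
      rwa [he, Nat.ModEq, Nat.mod_eq_of_lt i.2, Nat.mod_eq_of_lt j.2] at hm
    rw [Fin.ext hij]
  have hcard : Fintype.card (Fin e × (G ⧸ Subgroup.zpowers τ)) = Fintype.card G := by
    rw [Fintype.card_prod, Fintype.card_fin]
    have h1 := Subgroup.card_eq_card_quotient_mul_card_subgroup (Subgroup.zpowers τ)
    rw [Nat.card_eq_fintype_card, Nat.card_eq_fintype_card, Nat.card_eq_fintype_card,
      Fintype.card_zpowers, he] at h1
    rw [mul_comm]
    exact h1.symm
  let φ : (Fin e × (G ⧸ Subgroup.zpowers τ)) ≃ G :=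
    Equiv.ofBijective f ((Fintype.bijective_iff_injective_and_card f).mpr ⟨hinjf, hcard⟩)
  let c : MonoidAlgebra ℤ G :=
    ∑ q : G ⧸ Subgroup.zpowers τ, MonoidAlgebra.single (Quotient.out q) (b.coeff (Quotient.out q))
  refine ⟨c, ?_⟩
  have hNc : (∑ i ∈ Finset.range e, MonoidAlgebra.of ℤ G (τ ^ i)) * c = b := by
    rw [Finset.sum_mul]
    have h2 : ∀ i : ℕ, MonoidAlgebra.of ℤ G (τ ^ i) * c
        = ∑ q : G ⧸ Subgroup.zpowers τ,
            MonoidAlgebra.single (τ ^ i * Quotient.out q) (b.coeff (Quotient.out q)) := by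
      intro i
      rw [Finset.mul_sum]
      refine Finset.sum_congr rfl fun q _ => ?_
      rw [show MonoidAlgebra.of ℤ G (τ ^ i) = MonoidAlgebra.single (τ ^ i) (1 : ℤ) from rfl,
        MonoidAlgebra.single_mul_single, one_mul]
    simp_rw [h2]
    rw [Finset.sum_range (fun i => ∑ q : G ⧸ Subgroup.zpowers τ,
      MonoidAlgebra.single (τ ^ i * Quotient.out q) (b.coeff (Quotient.out q)))]
    rw [← Fintype.sum_prod_type (f := fun x : Fin e × (G ⧸ Subgroup.zpowers τ) =>
      MonoidAlgebra.single (τ ^ (x.1 : ℕ) * Quotient.out x.2) (b.coeff (Quotient.out x.2)))]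
    rw [Fintype.sum_equiv φ _ (fun g => MonoidAlgebra.single g (b.coeff g)) ?_]
    · apply MonoidAlgebra.coeff_injective
      rw [MonoidAlgebra.coeff_sum]
      exact Finsupp.univ_sum_single b.coeff
    · rintro ⟨i, q⟩
      have hbφ : b.coeff (φ (i, q)) = b.coeff (Quotient.out q) := by
        show b.coeff (τ ^ (i : ℕ) * Quotient.out q) = _
        rw [mul_comm]
        exact hinv (Quotient.out q) (i : ℕ)
      show MonoidAlgebra.single (τ ^ (i : ℕ) * Quotient.out q) (b.coeff (Quotient.out q))
        = MonoidAlgebra.single (φ (i, q)) (b.coeff (φ (i, q)))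
      rw [hbφ]
      rfl
  rw [← hNc, mul_comm]
/-- Let `G` be a finite abelian group generated by `τ` (of order `e`) and
`σ̃`, let `I = ⟨τ⟩`, `π : ℤ[G] → ℤ[G/I]`, `σ` the image of `σ̃`, and
`W = {(r,s) ∈ ΔG × ℤ[G/I] : π(r) = (1 − σ⁻¹)s}`.  Then `g_σ = (1 − σ̃⁻¹, 1)` and
`g_τ = (τ − 1, 0)` lie in `W` and generate it, and the kernel of
`ℤ[G]² → W, (a,b) ↦ a·g_σ + b·g_τ` is generated by `(τ − 1, −(1 − σ̃⁻¹))` and `(0, N_I)`. -/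
theorem ritterWeiss_W_presentation
    (G : Type*) [CommGroup G] [Fintype G] (τ σt : G)
    (hgen : Subgroup.closure ({τ, σt} : Set G) = ⊤) (e : ℕ) (he : orderOf τ = e) :
    letI I : Subgroup G := Subgroup.zpowers τ
    letI π : MonoidAlgebra ℤ G →+* MonoidAlgebra ℤ (G ⧸ I) :=
      MonoidAlgebra.mapDomainRingHom ℤ (QuotientGroup.mk' I)
    letI : Algebra (MonoidAlgebra ℤ G) (MonoidAlgebra ℤ (G ⧸ I)) := π.toAlgebra
    letI ΔG : Ideal (MonoidAlgebra ℤ G) :=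
      RingHom.ker ((MonoidAlgebra.lift ℤ ℤ G) (1 : G →* ℤ)).toRingHom
    letI σ : G ⧸ I := QuotientGroup.mk' I σt
    letI W : Submodule (MonoidAlgebra ℤ G)
        (MonoidAlgebra ℤ G × MonoidAlgebra ℤ (G ⧸ I)) :=
      Submodule.comap
          (LinearMap.fst (MonoidAlgebra ℤ G) (MonoidAlgebra ℤ G) (MonoidAlgebra ℤ (G ⧸ I)))
          ΔG ⊓
        LinearMap.ker
          ((Algebra.linearMap (MonoidAlgebra ℤ G) (MonoidAlgebra ℤ (G ⧸ I))).comp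
              (LinearMap.fst (MonoidAlgebra ℤ G) (MonoidAlgebra ℤ G)
                (MonoidAlgebra ℤ (G ⧸ I))) -
            (LinearMap.mulLeft (MonoidAlgebra ℤ G)
                ((1 : MonoidAlgebra ℤ (G ⧸ I)) - MonoidAlgebra.of ℤ (G ⧸ I) σ⁻¹)).comp
              (LinearMap.snd (MonoidAlgebra ℤ G) (MonoidAlgebra ℤ G)
                (MonoidAlgebra ℤ (G ⧸ I))))
    letI gσ : MonoidAlgebra ℤ G × MonoidAlgebra ℤ (G ⧸ I) :=
      ((1 : MonoidAlgebra ℤ G) - MonoidAlgebra.of ℤ G σt⁻¹, (1 : MonoidAlgebra ℤ (G ⧸ I)))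
    letI gτ : MonoidAlgebra ℤ G × MonoidAlgebra ℤ (G ⧸ I) :=
      (MonoidAlgebra.of ℤ G τ - 1, (0 : MonoidAlgebra ℤ (G ⧸ I)))
    letI ψ : MonoidAlgebra ℤ G × MonoidAlgebra ℤ G →ₗ[MonoidAlgebra ℤ G]
        MonoidAlgebra ℤ G × MonoidAlgebra ℤ (G ⧸ I) :=
      LinearMap.coprod
        (LinearMap.toSpanSingleton (MonoidAlgebra ℤ G)
          (MonoidAlgebra ℤ G × MonoidAlgebra ℤ (G ⧸ I)) gσ)
        (LinearMap.toSpanSingleton (MonoidAlgebra ℤ G)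
          (MonoidAlgebra ℤ G × MonoidAlgebra ℤ (G ⧸ I)) gτ)
    gσ ∈ W ∧ gτ ∈ W ∧ LinearMap.range ψ = W ∧
      LinearMap.ker ψ =
        Submodule.span (MonoidAlgebra ℤ G)
          {(MonoidAlgebra.of ℤ G τ - 1,
              -((1 : MonoidAlgebra ℤ G) - MonoidAlgebra.of ℤ G σt⁻¹)),
            ((0 : MonoidAlgebra ℤ G),
              ∑ i ∈ Finset.range e, MonoidAlgebra.of ℤ G (τ ^ i))} := by
  classical
  letI alg : Algebra (MonoidAlgebra ℤ G) (MonoidAlgebra ℤ (G ⧸ Subgroup.zpowers τ)) :=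
    (MonoidAlgebra.mapDomainRingHom ℤ (QuotientGroup.mk' (Subgroup.zpowers τ))).toAlgebra
  set Q := MonoidAlgebra ℤ (G ⧸ Subgroup.zpowers τ) with hQdef
  set π : MonoidAlgebra ℤ G →+* Q :=
    MonoidAlgebra.mapDomainRingHom ℤ (QuotientGroup.mk' (Subgroup.zpowers τ)) with hπdef
  set σ' : G ⧸ Subgroup.zpowers τ := (QuotientGroup.mk' (Subgroup.zpowers τ)) σt with hσ'def
  set ε : MonoidAlgebra ℤ G →+* ℤ := ((MonoidAlgebra.lift ℤ ℤ G) (1 : G →* ℤ)).toRingHom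
    with hεdef
  -- basic facts
  have hπof : ∀ g : G, π (MonoidAlgebra.of ℤ G g)
      = MonoidAlgebra.of ℤ (G ⧸ Subgroup.zpowers τ) ((QuotientGroup.mk' (Subgroup.zpowers τ)) g) :=
    fun g => MonoidAlgebra.mapDomain_single
  have hεof : ∀ g : G, ε (MonoidAlgebra.of ℤ G g) = 1 := by
    intro g
    show ((MonoidAlgebra.lift ℤ ℤ G) (1 : G →* ℤ)) (MonoidAlgebra.single g 1) = 1
    rw [MonoidAlgebra.lift_single]
    simp
  have hτ1 : (QuotientGroup.mk' (Subgroup.zpowers τ)) τ = 1 :=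
    (QuotientGroup.eq_one_iff τ).mpr (Subgroup.mem_zpowers τ)
  have hπτ : π (MonoidAlgebra.of ℤ G τ - 1) = 0 := by
    rw [map_sub, map_one, hπof, hτ1, map_one, sub_self]
  have hsmul : ∀ (a : MonoidAlgebra ℤ G) (y : Q), a • y = π a * y := by
    intro a y
    rw [Algebra.smul_def, RingHom.algebraMap_toAlgebra]
  have hN0 : (∑ i ∈ Finset.range e, MonoidAlgebra.of ℤ G (τ ^ i))
      * (MonoidAlgebra.of ℤ G τ - 1) = 0 := by
    rw [Finset.sum_mul]
    have h2 : ∀ i : ℕ, MonoidAlgebra.of ℤ G (τ ^ i) * (MonoidAlgebra.of ℤ G τ - 1)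
        = MonoidAlgebra.of ℤ G (τ ^ (i + 1)) - MonoidAlgebra.of ℤ G (τ ^ i) := by
      intro i
      rw [mul_sub, mul_one, ← map_mul, ← pow_succ]
    simp_rw [h2]
    rw [Finset.sum_range_sub (fun i => MonoidAlgebra.of ℤ G (τ ^ i)) e]
    rw [pow_zero, ← he, pow_orderOf_eq_one, sub_self]
  have hεσ : ε (1 - MonoidAlgebra.of ℤ G σt⁻¹) = 0 := by
    rw [map_sub, map_one, hεof, sub_self]
  have hετ : ε (MonoidAlgebra.of ℤ G τ - 1) = 0 := by
    rw [map_sub, map_one, hεof, sub_self]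
  have halgmap : ∀ x : MonoidAlgebra ℤ G,
      (algebraMap (MonoidAlgebra ℤ G) (MonoidAlgebra ℤ (G ⧸ Subgroup.zpowers τ))) x = π x := by
    intro x
    rw [Algebra.algebraMap_eq_smul_one, hsmul, mul_one]
  set W : Submodule (MonoidAlgebra ℤ G)
      (MonoidAlgebra ℤ G × MonoidAlgebra ℤ (G ⧸ Subgroup.zpowers τ)) :=
    Submodule.comap (LinearMap.fst (MonoidAlgebra ℤ G) (MonoidAlgebra ℤ G)
        (MonoidAlgebra ℤ (G ⧸ Subgroup.zpowers τ))) (RingHom.ker ε) ⊓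
      LinearMap.ker
        (Algebra.linearMap (MonoidAlgebra ℤ G) (MonoidAlgebra ℤ (G ⧸ Subgroup.zpowers τ)) ∘ₗ
            LinearMap.fst (MonoidAlgebra ℤ G) (MonoidAlgebra ℤ G)
              (MonoidAlgebra ℤ (G ⧸ Subgroup.zpowers τ)) -
          LinearMap.mulLeft (MonoidAlgebra ℤ G)
              (1 - MonoidAlgebra.of ℤ (G ⧸ Subgroup.zpowers τ) σ'⁻¹) ∘ₗ
            LinearMap.snd (MonoidAlgebra ℤ G) (MonoidAlgebra ℤ G)
              (MonoidAlgebra ℤ (G ⧸ Subgroup.zpowers τ))) with hWdef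
  set ψ : MonoidAlgebra ℤ G × MonoidAlgebra ℤ G →ₗ[MonoidAlgebra ℤ G]
      MonoidAlgebra ℤ G × MonoidAlgebra ℤ (G ⧸ Subgroup.zpowers τ) :=
    (LinearMap.toSpanSingleton (MonoidAlgebra ℤ G)
        (MonoidAlgebra ℤ G × MonoidAlgebra ℤ (G ⧸ Subgroup.zpowers τ))
        (1 - MonoidAlgebra.of ℤ G σt⁻¹, 1)).coprod
      (LinearMap.toSpanSingleton (MonoidAlgebra ℤ G)
        (MonoidAlgebra ℤ G × MonoidAlgebra ℤ (G ⧸ Subgroup.zpowers τ))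
        (MonoidAlgebra.of ℤ G τ - 1, 0)) with hψdef
  have hWmem : ∀ x : MonoidAlgebra ℤ G × MonoidAlgebra ℤ (G ⧸ Subgroup.zpowers τ),
      x ∈ W ↔ ε x.1 = 0 ∧
        π x.1 = (1 - MonoidAlgebra.of ℤ (G ⧸ Subgroup.zpowers τ) σ'⁻¹) * x.2 := by
    intro x
    rw [hWdef, Submodule.mem_inf]
    apply and_congr
    · simp [Submodule.mem_comap, RingHom.mem_ker]
    · rw [LinearMap.mem_ker, LinearMap.sub_apply, LinearMap.comp_apply, LinearMap.comp_apply,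
        LinearMap.fst_apply, LinearMap.snd_apply, Algebra.linearMap_apply, halgmap,
        LinearMap.mulLeft_apply, sub_eq_zero]
  have hψapp : ∀ p : MonoidAlgebra ℤ G × MonoidAlgebra ℤ G,
      ψ p = (p.1 * (1 - MonoidAlgebra.of ℤ G σt⁻¹) + p.2 * (MonoidAlgebra.of ℤ G τ - 1),
        π p.1) := by
    intro p
    rw [hψdef]
    simp only [LinearMap.coprod_apply, LinearMap.toSpanSingleton_apply, Prod.smul_mk,
      Prod.mk_add_mk, smul_eq_mul]
    rw [hsmul, hsmul, mul_one, mul_zero, add_zero]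
  -- part 1
  have h1 : ((1 : MonoidAlgebra ℤ G) - MonoidAlgebra.of ℤ G σt⁻¹,
      (1 : MonoidAlgebra ℤ (G ⧸ Subgroup.zpowers τ))) ∈ W := by
    refine (hWmem _).mpr ⟨hεσ, ?_⟩
    show π (1 - MonoidAlgebra.of ℤ G σt⁻¹) = _ * 1
    rw [map_sub, map_one, hπof, map_inv, ← hσ'def, mul_one]
  -- part 2
  have h2 : (MonoidAlgebra.of ℤ G τ - 1,
      (0 : MonoidAlgebra ℤ (G ⧸ Subgroup.zpowers τ))) ∈ W := by
    refine (hWmem _).mpr ⟨hετ, ?_⟩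
    show π (MonoidAlgebra.of ℤ G τ - 1) = _ * 0
    rw [hπτ, mul_zero]
  -- part 3
  have h3 : LinearMap.range ψ = W := by
    apply le_antisymm
    · rintro x ⟨p, rfl⟩
      rw [hψapp]
      refine (hWmem _).mpr ⟨?_, ?_⟩
      · show ε (p.1 * (1 - MonoidAlgebra.of ℤ G σt⁻¹)
            + p.2 * (MonoidAlgebra.of ℤ G τ - 1)) = 0
        rw [map_add, map_mul, map_mul, hεσ, hετ, mul_zero, mul_zero, add_zero]
      · show π (p.1 * (1 - MonoidAlgebra.of ℤ G σt⁻¹)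
            + p.2 * (MonoidAlgebra.of ℤ G τ - 1)) = _ * π p.1
        rw [map_add, map_mul, map_mul, hπτ, mul_zero, add_zero, map_sub, map_one, hπof,
          map_inv, ← hσ'def]
        ring
    · intro x hx
      obtain ⟨hx1, hx2⟩ := (hWmem x).mp hx
      obtain ⟨a, ha⟩ := RW_pi_surj (Subgroup.zpowers τ) x.2
      have ha' : π a = x.2 := ha
      have hker : π (x.1 - a * (1 - MonoidAlgebra.of ℤ G σt⁻¹)) = 0 := by
        rw [map_sub, map_mul, map_sub, map_one, hπof, map_inv, ← hσ'def, hx2, ha']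
        ring
      have hker' : (MonoidAlgebra.mapDomainRingHom ℤ (QuotientGroup.mk' (Subgroup.zpowers τ)))
          (x.1 - a * (1 - MonoidAlgebra.of ℤ G σt⁻¹)) = 0 := hker
      obtain ⟨b, hb⟩ := Ideal.mem_span_singleton'.mp (RW_ker_pi_le τ _ hker')
      refine ⟨(a, b), ?_⟩
      rw [hψapp]
      refine Prod.ext_iff.mpr ⟨?_, ?_⟩
      · show a * (1 - MonoidAlgebra.of ℤ G σt⁻¹) + b * (MonoidAlgebra.of ℤ G τ - 1) = x.1
        rw [hb]
        ring
      · exact ha'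
  -- part 4
  have h4 : LinearMap.ker ψ = Submodule.span (MonoidAlgebra ℤ G)
      {(MonoidAlgebra.of ℤ G τ - 1,
          -((1 : MonoidAlgebra ℤ G) - MonoidAlgebra.of ℤ G σt⁻¹)),
        ((0 : MonoidAlgebra ℤ G),
          ∑ i ∈ Finset.range e, MonoidAlgebra.of ℤ G (τ ^ i))} := by
    apply le_antisymm
    · intro x hx
      rw [LinearMap.mem_ker, hψapp, Prod.mk_eq_zero] at hx
      obtain ⟨hx1, hx2⟩ := hx
      have hx2' : (MonoidAlgebra.mapDomainRingHom ℤ (QuotientGroup.mk' (Subgroup.zpowers τ)))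
          x.1 = 0 := hx2
      obtain ⟨c, hc⟩ := Ideal.mem_span_singleton'.mp (RW_ker_pi_le τ x.1 hx2')
      have hb' : (x.2 + c * (1 - MonoidAlgebra.of ℤ G σt⁻¹))
          * (MonoidAlgebra.of ℤ G τ - 1) = 0 := by
        linear_combination hx1 + (1 - MonoidAlgebra.of ℤ G σt⁻¹) * hc
      obtain ⟨d, hd⟩ := RW_ann τ e he _ hb'
      have hx' : x = c • ((MonoidAlgebra.of ℤ G τ - 1,
            -((1 : MonoidAlgebra ℤ G) - MonoidAlgebra.of ℤ G σt⁻¹))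
              : MonoidAlgebra ℤ G × MonoidAlgebra ℤ G)
          + d • ((0 : MonoidAlgebra ℤ G),
              ∑ i ∈ Finset.range e, MonoidAlgebra.of ℤ G (τ ^ i)) := by
        simp only [Prod.smul_mk, Prod.mk_add_mk, smul_eq_mul]
        refine Prod.ext_iff.mpr ⟨?_, ?_⟩
        · show x.1 = c * (MonoidAlgebra.of ℤ G τ - 1) + d * 0
          rw [hc]
          ring
        · show x.2 = _
          linear_combination hd
      rw [hx']
      exact Submodule.add_mem _
        (Submodule.smul_mem _ _ (Submodule.subset_span (Set.mem_insert _ _)))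
        (Submodule.smul_mem _ _ (Submodule.subset_span (Set.mem_insert_of_mem _ rfl)))
    · rw [Submodule.span_le]
      rintro x (rfl | hx)
      · rw [SetLike.mem_coe, LinearMap.mem_ker, hψapp, Prod.mk_eq_zero]
        constructor
        · show (MonoidAlgebra.of ℤ G τ - 1) * (1 - MonoidAlgebra.of ℤ G σt⁻¹)
            + -((1 : MonoidAlgebra ℤ G) - MonoidAlgebra.of ℤ G σt⁻¹)
              * (MonoidAlgebra.of ℤ G τ - 1) = 0
          ring
        · exact hπτ
      · rw [Set.mem_singleton_iff] at hx
        subst hx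
        rw [SetLike.mem_coe, LinearMap.mem_ker, hψapp, Prod.mk_eq_zero]
        constructor
        · show (0 : MonoidAlgebra ℤ G) * (1 - MonoidAlgebra.of ℤ G σt⁻¹)
            + (∑ i ∈ Finset.range e, MonoidAlgebra.of ℤ G (τ ^ i))
              * (MonoidAlgebra.of ℤ G τ - 1) = 0
          rw [hN0]
          ring
        · exact map_zero π
  exact ⟨h1, h2, h3, h4⟩
end

section
/- Let p be a prime, φ : G' → G a surjective homomorphism of finite abelian groups, c' ∈ G' an element with (c')² = 1, and c = φ(c'). Let Σ ⊆ Σ' be finite index sets, and for each v ∈ Σ' let D'_v ⊆ G' be a subgroup with image D_v = φ(D'_v) ⊆ G; for each v ∈ Σ' − Σ, let σ_v ∈ D_v be a chosen element. Let φ̄ : Q_p[G']/(1+c') → Q_p[G]/(1+c) be the induced ring map. Set e' = ∏_{v∈Σ'} (1 − N_{D'_v}/#D'_v) in Q_p[G']/(1+c'), e = ∏_{v∈Σ} (1 − N_{D_v}/#D_v) in Q_p[G]/(1+c), and P = ∏_{v∈Σ'−Σ} (1 − σ_v^{-1}) in Q_p[G]/(1+c). Then for every x ∈ Q_p[G']/(1+c')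 with e'·x = 0, one has e · φ̄(x) · P = 0 in Q_p[G]/(1+c). -/
open MonoidAlgebra

set_option synthInstance.maxHeartbeats 1000000
set_option maxHeartbeats 1000000

/-- The ring homomorphism `ℚ_[p][G']/(1+c') →+* ℚ_[p][G]/(1+φ(c'))` induced by a group
homomorphism `φ : G' →* G` with `c' ∈ G'` satisfying `c'² = 1`. -/
noncomputable def minusQuotMapDomain (p : ℕ) [Fact p.Prime] {G' G : Type*} [CommGroup G']
    [CommGroup G] (φ : G' →* G) (c' : G') :
    (MonoidAlgebra ℚ_[p] G' ⧸
        Ideal.span {(1 : MonoidAlgebra ℚ_[p] G') + MonoidAlgebra.of ℚ_[p] G' c'}) →+*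
    (MonoidAlgebra ℚ_[p] G ⧸
        Ideal.span {(1 : MonoidAlgebra ℚ_[p] G) + MonoidAlgebra.of ℚ_[p] G (φ c')}) :=
  Ideal.quotientMap _ (MonoidAlgebra.mapDomainRingHom ℚ_[p] φ) (by
    rw [Ideal.span_le, Set.singleton_subset_iff]
    have : MonoidAlgebra.mapDomainRingHom ℚ_[p] φ
        ((1 : MonoidAlgebra ℚ_[p] G') + MonoidAlgebra.of ℚ_[p] G' c') =
        (1 : MonoidAlgebra ℚ_[p] G) + MonoidAlgebra.of ℚ_[p] G (φ c') := by
      simp only [map_add, map_one]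
      congr 1
      simpa [MonoidAlgebra.mapDomainRingHom, MonoidAlgebra.of_apply] using
        Finsupp.mapDomain_single (f := φ) (a := c') (b := (1 : ℚ_[p]))
    simp only [SetLike.mem_coe, Ideal.mem_comap, this]
    exact Ideal.subset_span rfl)

set_option linter.unusedSectionVars false
set_option linter.unusedVariables false
set_option linter.unnecessarySimpa false

section helpers

variable (p : ℕ) [Fact p.Prime] {G' G : Type*} [CommGroup G'] [CommGroup G]
  [Fintype G'] [Fintype G]

lemma fiber_card_eq [DecidableEq G] (φ : G' →* G) (D : Subgroup G') {h₁ h₂ : G}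
    (H1 : h₁ ∈ D.map φ) (H2 : h₂ ∈ D.map φ) :
    ((Set.toFinite (D : Set G')).toFinset.filter (fun g => φ g = h₁)).card =
    ((Set.toFinite (D : Set G')).toFinset.filter (fun g => φ g = h₂)).card := by
  obtain ⟨g₁, hg₁, rfl⟩ := H1
  obtain ⟨g₂, hg₂, rfl⟩ := H2
  apply Finset.card_bij' (fun g _ => g * g₁⁻¹ * g₂) (fun g _ => g * g₂⁻¹ * g₁)
  · intro a ha
    simp only [Finset.mem_filter, Set.Finite.mem_toFinset, SetLike.mem_coe] at ha ⊢
    exact ⟨mul_mem (mul_mem ha.1 (inv_mem hg₁)) hg₂, by simp [ha.2]⟩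
  · intro a ha
    simp only [Finset.mem_filter, Set.Finite.mem_toFinset, SetLike.mem_coe] at ha ⊢
    exact ⟨mul_mem (mul_mem ha.1 (inv_mem hg₂)) hg₁, by simp [ha.2]⟩
  · intro a _; group
  · intro a _; group

lemma card_toFinset_sub (D : Subgroup G) :
    ((Set.toFinite (D : Set G)).toFinset).card = Nat.card D := by
  rw [← Set.ncard_eq_toFinset_card (D : Set G), ← Nat.card_coe_set_eq]
  rfl

-- norm element times a member's inverse
lemma norm_mul_of_inv (D : Subgroup G) {σ : G} (hσ : σ ∈ D) :
    (∑ g ∈ (Set.toFinite (D : Set G)).toFinset, MonoidAlgebra.of ℚ_[p] G g) *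
      MonoidAlgebra.of ℚ_[p] G σ⁻¹ =
    ∑ g ∈ (Set.toFinite (D : Set G)).toFinset, MonoidAlgebra.of ℚ_[p] G g := by
  rw [Finset.sum_mul]
  simp only [MonoidAlgebra.of_apply, MonoidAlgebra.single_mul_single, mul_one]
  apply Finset.sum_bij' (fun g _ => g * σ⁻¹) (fun g _ => g * σ)
  · intro a ha
    simp only [Set.Finite.mem_toFinset, SetLike.mem_coe] at ha ⊢
    exact mul_mem ha (inv_mem hσ)
  · intro a ha
    simp only [Set.Finite.mem_toFinset, SetLike.mem_coe] at ha ⊢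
    exact mul_mem ha hσ
  · intro a _; group
  · intro a _; group
  · intro a _; rfl

-- mapDomain of the scaled norm element
lemma mapDomain_norm (φ : G' →* G) (D : Subgroup G') :
    MonoidAlgebra.mapDomainRingHom ℚ_[p] φ
      ((Nat.card D : ℚ_[p])⁻¹ • ∑ g ∈ (Set.toFinite (D : Set G')).toFinset,
        MonoidAlgebra.of ℚ_[p] G' g) =
    (Nat.card (D.map φ) : ℚ_[p])⁻¹ • ∑ h ∈ (Set.toFinite ((D.map φ : Subgroup G) : Set G)).toFinset,
      MonoidAlgebra.of ℚ_[p] G h := by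
  classical
  set tD' := (Set.toFinite (D : Set G')).toFinset with htD'
  set tD := (Set.toFinite ((D.map φ : Subgroup G) : Set G)).toFinset with htD
  have hmaps : ∀ g ∈ tD', φ g ∈ tD := by
    intro g hg
    simp only [htD', htD, Set.Finite.mem_toFinset, SetLike.mem_coe] at hg ⊢
    exact ⟨g, hg, rfl⟩
  -- fiber card constant
  have h1 : (1 : G) ∈ tD := by
    simp only [htD, Set.Finite.mem_toFinset, SetLike.mem_coe]; exact one_mem _
  set k := (tD'.filter (fun g => φ g = (1:G))).card with hk
  have hfib : ∀ h ∈ tD, (tD'.filter (fun g => φ g = h)).card = k := by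
    intro h hh
    simp only [htD, Set.Finite.mem_toFinset, SetLike.mem_coe] at hh
    exact fiber_card_eq φ D hh (one_mem _)
  have hcard : tD'.card = tD.card * k := by
    rw [Finset.card_eq_sum_card_fiberwise hmaps]
    rw [Finset.sum_congr rfl hfib, Finset.sum_const, smul_eq_mul]
  -- mapDomain of sum
  have hmap : MonoidAlgebra.mapDomainRingHom ℚ_[p] φ
      (∑ g ∈ tD', MonoidAlgebra.of ℚ_[p] G' g) =
      k • ∑ h ∈ tD, MonoidAlgebra.of ℚ_[p] G h := by
    have : MonoidAlgebra.mapDomainRingHom ℚ_[p] φ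
        (∑ g ∈ tD', MonoidAlgebra.of ℚ_[p] G' g) =
        ∑ g ∈ tD', MonoidAlgebra.of ℚ_[p] G (φ g) := by
      rw [map_sum]
      refine Finset.sum_congr rfl fun g _ => ?_
      simpa [MonoidAlgebra.mapDomainRingHom, MonoidAlgebra.of_apply] using
        Finsupp.mapDomain_single (f := φ) (a := g) (b := (1 : ℚ_[p]))
    rw [this, ← Finset.sum_fiberwise_of_maps_to hmaps]
    rw [Finset.smul_sum]
    refine Finset.sum_congr rfl fun h hh => ?_
    have : ∀ g ∈ tD'.filter (fun g => φ g = h),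
        MonoidAlgebra.of ℚ_[p] G (φ g) = MonoidAlgebra.of ℚ_[p] G h := by
      intro g hg
      simp only [Finset.mem_filter] at hg
      rw [hg.2]
    rw [Finset.sum_congr rfl this, Finset.sum_const, hfib h hh]
  have hlin : ∀ (r : ℚ_[p]) (y : MonoidAlgebra ℚ_[p] G'),
      MonoidAlgebra.mapDomainRingHom ℚ_[p] φ (r • y) =
        r • MonoidAlgebra.mapDomainRingHom ℚ_[p] φ y := fun r y =>
    MonoidAlgebra.mapDomain_smul φ r y
  rw [hlin, hmap]
  have hn : (Nat.card (D.map φ) : ℚ_[p]) ≠ 0 :=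
    Nat.cast_ne_zero.mpr Nat.card_pos.ne'
  have hk0 : k ≠ 0 := by
    intro h0
    have : tD'.card = 0 := by rw [hcard, h0, mul_zero]
    have h1' : (1 : G') ∈ tD' := by
      simp only [htD', Set.Finite.mem_toFinset, SetLike.mem_coe]; exact one_mem _
    simp [Finset.card_eq_zero] at this
    rw [this] at h1'
    exact absurd h1' (Finset.notMem_empty _)
  have hn' : (Nat.card D : ℚ_[p]) = (Nat.card (D.map φ) : ℚ_[p]) * k := by
    rw [← card_toFinset_sub (D.map φ), ← card_toFinset_sub D]
    exact_mod_cast hcard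
  rw [hn', ← Nat.cast_smul_eq_nsmul ℚ_[p] k, smul_smul]
  congr 1
  have hkq : (k : ℚ_[p]) ≠ 0 := Nat.cast_ne_zero.mpr hk0
  field_simp

end helpers

/-- With `φ : G' → G` a surjection of finite abelian groups, `c'² = 1`,
`Σ ⊆ S'` finite index sets, subgroups `D'_v ⊆ G'` with images `D_v = φ(D'_v)`, and chosen
elements `σ_v ∈ D_v` for `v ∈ S' − Σ`, set
`e' = ∏_{v∈S'} (1 − N_{D'_v}/#D'_v)`, `e = ∏_{v∈Σ} (1 − N_{D_v}/#D_v)` and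
`P = ∏_{v∈S'−Σ} (1 − σ_v⁻¹)`.  Then for every `x ∈ ℚ_[p][G']/(1+c')` with `e'·x = 0`, one has
`e·φ̄(x)·P = 0` in `ℚ_[p][G]/(1+c)`. -/
theorem smul_map_mul_eulerFactor_eq_zero
    (p : ℕ) [Fact p.Prime] {G' G : Type*} [CommGroup G'] [CommGroup G] [Fintype G'] [Fintype G]
    (φ : G' →* G) (hφ : Function.Surjective φ) (c' : G') (hc' : c' ^ 2 = 1)
    {ι : Type*} [DecidableEq ι] (S₁ S' : Finset ι) (hS : S₁ ⊆ S')
    (D' : ι → Subgroup G') (σ : ι → G)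
    (hσ : ∀ v ∈ S' \ S₁, σ v ∈ (D' v).map φ)
    (x : MonoidAlgebra ℚ_[p] G' ⧸
      Ideal.span {(1 : MonoidAlgebra ℚ_[p] G') + MonoidAlgebra.of ℚ_[p] G' c'})
    (hx : Ideal.Quotient.mk
        (Ideal.span {(1 : MonoidAlgebra ℚ_[p] G') + MonoidAlgebra.of ℚ_[p] G' c'})
        (∏ v ∈ S', ((1 : MonoidAlgebra ℚ_[p] G') - (Nat.card (D' v) : ℚ_[p])⁻¹ •
          ∑ g ∈ (Set.toFinite ((D' v : Set G'))).toFinset, MonoidAlgebra.of ℚ_[p] G' g)) *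
        x = 0) :
    Ideal.Quotient.mk
        (Ideal.span {(1 : MonoidAlgebra ℚ_[p] G) + MonoidAlgebra.of ℚ_[p] G (φ c')})
        (∏ v ∈ S₁, ((1 : MonoidAlgebra ℚ_[p] G) - (Nat.card ((D' v).map φ) : ℚ_[p])⁻¹ •
          ∑ g ∈ (Set.toFinite (((D' v).map φ : Subgroup G) : Set G)).toFinset,
            MonoidAlgebra.of ℚ_[p] G g)) *
      minusQuotMapDomain p φ c' x *
      Ideal.Quotient.mk
        (Ideal.span {(1 : MonoidAlgebra ℚ_[p] G) + MonoidAlgebra.of ℚ_[p] G (φ c')})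
        (∏ v ∈ S' \ S₁, ((1 : MonoidAlgebra ℚ_[p] G) - MonoidAlgebra.of ℚ_[p] G (σ v)⁻¹)) =
      0 := by
  classical
  set I : Ideal (MonoidAlgebra ℚ_[p] G) :=
    Ideal.span {(1 : MonoidAlgebra ℚ_[p] G) + MonoidAlgebra.of ℚ_[p] G (φ c')} with hI
  -- notation for the norm factors on the G side
  set N : ι → MonoidAlgebra ℚ_[p] G := fun v =>
    (1 : MonoidAlgebra ℚ_[p] G) - (Nat.card ((D' v).map φ) : ℚ_[p])⁻¹ •
      ∑ g ∈ (Set.toFinite (((D' v).map φ : Subgroup G) : Set G)).toFinset,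
        MonoidAlgebra.of ℚ_[p] G g with hN
  -- apply the induced map to hx
  have h2 := congrArg (minusQuotMapDomain p φ c') hx
  rw [map_mul, map_zero, minusQuotMapDomain, Ideal.quotientMap_mk] at h2
  -- compute the image of e'
  have hmapE : MonoidAlgebra.mapDomainRingHom ℚ_[p] φ
      (∏ v ∈ S', ((1 : MonoidAlgebra ℚ_[p] G') - (Nat.card (D' v) : ℚ_[p])⁻¹ •
        ∑ g ∈ (Set.toFinite ((D' v : Set G'))).toFinset, MonoidAlgebra.of ℚ_[p] G' g)) =
      ∏ v ∈ S', N v := by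
    rw [map_prod]
    refine Finset.prod_congr rfl fun v _ => ?_
    rw [map_sub, map_one, mapDomain_norm p φ (D' v)]
  rw [hmapE] at h2
  -- the Euler factor identity
  have hfac : ∀ v ∈ S' \ S₁,
      (1 : MonoidAlgebra ℚ_[p] G) - MonoidAlgebra.of ℚ_[p] G (σ v)⁻¹ =
      N v * ((1 : MonoidAlgebra ℚ_[p] G) - MonoidAlgebra.of ℚ_[p] G (σ v)⁻¹) := by
    intro v hv
    set a : MonoidAlgebra ℚ_[p] G := (Nat.card ((D' v).map φ) : ℚ_[p])⁻¹ •
      ∑ g ∈ (Set.toFinite (((D' v).map φ : Subgroup G) : Set G)).toFinset,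
        MonoidAlgebra.of ℚ_[p] G g with ha
    have hab : a * MonoidAlgebra.of ℚ_[p] G (σ v)⁻¹ = a := by
      rw [ha, smul_mul_assoc, norm_mul_of_inv p ((D' v).map φ) (hσ v hv)]
    have expand : (1 - a) * (1 - MonoidAlgebra.of ℚ_[p] G (σ v)⁻¹) =
        1 - MonoidAlgebra.of ℚ_[p] G (σ v)⁻¹ -
          (a - a * MonoidAlgebra.of ℚ_[p] G (σ v)⁻¹) := by ring
    rw [hN]
    simp only
    rw [← ha, expand, hab, sub_self, sub_zero]
  have hP : (∏ v ∈ S' \ S₁, ((1 : MonoidAlgebra ℚ_[p] G) - MonoidAlgebra.of ℚ_[p] G (σ v)⁻¹)) =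
      (∏ v ∈ S' \ S₁, N v) *
        ∏ v ∈ S' \ S₁, ((1 : MonoidAlgebra ℚ_[p] G) - MonoidAlgebra.of ℚ_[p] G (σ v)⁻¹) := by
    rw [← Finset.prod_mul_distrib]
    exact Finset.prod_congr rfl hfac
  have hsplit : (∏ v ∈ S' \ S₁, N v) * ∏ v ∈ S₁, N v = ∏ v ∈ S', N v :=
    Finset.prod_sdiff hS
  rw [hP, map_mul]
  have h3 : (Ideal.Quotient.mk I) (∏ v ∈ S₁, N v) *
      minusQuotMapDomain p φ c' x * (Ideal.Quotient.mk I) (∏ v ∈ S' \ S₁, N v) = 0 := by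
    have : (Ideal.Quotient.mk I) (∏ v ∈ S₁, N v) *
        (Ideal.Quotient.mk I) (∏ v ∈ S' \ S₁, N v) =
        (Ideal.Quotient.mk I) (∏ v ∈ S', N v) := by
      rw [← map_mul, mul_comm, hsplit]
    calc (Ideal.Quotient.mk I) (∏ v ∈ S₁, N v) * minusQuotMapDomain p φ c' x *
          (Ideal.Quotient.mk I) (∏ v ∈ S' \ S₁, N v)
        = (Ideal.Quotient.mk I) (∏ v ∈ S₁, N v) *
            (Ideal.Quotient.mk I) (∏ v ∈ S' \ S₁, N v) * minusQuotMapDomain p φ c' x := by ring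
      _ = (Ideal.Quotient.mk I) (∏ v ∈ S', N v) * minusQuotMapDomain p φ c' x := by rw [this]
      _ = 0 := h2
  calc (Ideal.Quotient.mk I) (∏ v ∈ S₁, N v) * minusQuotMapDomain p φ c' x *
        ((Ideal.Quotient.mk I) (∏ v ∈ S' \ S₁, N v) *
          (Ideal.Quotient.mk I) (∏ v ∈ S' \ S₁,
            ((1 : MonoidAlgebra ℚ_[p] G) - MonoidAlgebra.of ℚ_[p] G (σ v)⁻¹)))
      = ((Ideal.Quotient.mk I) (∏ v ∈ S₁, N v) * minusQuotMapDomain p φ c' x *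
          (Ideal.Quotient.mk I) (∏ v ∈ S' \ S₁, N v)) *
          (Ideal.Quotient.mk I) (∏ v ∈ S' \ S₁,
            ((1 : MonoidAlgebra ℚ_[p] G) - MonoidAlgebra.of ℚ_[p] G (σ v)⁻¹)) := by ring
    _ = 0 := by rw [h3, zero_mul]
end
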